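/- arXiv:1703.06061 — 5 statements merged into one kernel-verified Lean document; each statement's English description precedes it below -/
import Mathlib

section
/- A string w contains at most g(w)·k distinct factors of length k, where g(w) is the size of a smallest straight-line program producing w. -/
/-- A straight-line program over alphabet `α`: nonterminals `0, ..., n-1`, each with a
single nonempty right-hand side referring only to smaller nonterminals (acyclicity). -/
structure SLP (α : Type) where
  n : ℕ
  rhs : Fin n → List (Fin n ⊕ α)
  start : Fin n
  dec : ∀ i j, Sum.inl j ∈ rhs i → (j : ℕ) < (i : ℕ)
  ne : ∀ i, rhs i ≠ []

/-- The word derived by nonterminal `i`. -/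
def SLP.val {α : Type} (G : SLP α) (i : Fin G.n) : List α :=
  ((G.rhs i).attach.map (fun s =>
    match h : s.1 with
    | Sum.inl j => G.val j
    | Sum.inr a => [a])).flatten
termination_by (i : ℕ)
decreasing_by exact G.dec i _ (h ▸ s.2)

/-- The size of an SLP: total length of all right-hand sides. -/
def SLP.size {α : Type} (G : SLP α) : ℕ := ∑ i, (G.rhs i).length

def SLP.produces {α : Type} (G : SLP α) (w : List α) : Prop := G.val G.start = w

/-- `gsize w` is the size of a smallest SLP producing `w`. -/
noncomputable def gsize {α : Type} (w : List α) : ℕ :=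
  sInf {s | ∃ G : SLP α, G.produces w ∧ G.size = s}

/-!
Fix an SLP producing `w`. A length-`k` factor of the word derived by a rule `A → X₁ ⋯ Xₘ` either
lies strictly inside the word derived by a nonterminal `Xⱼ`, or is pinned down by a boundary
`j < m` of the right-hand side and the number `d < k` of its letters left of that boundary (a
terminal `Xⱼ` can contain a factor only if `k = 1`, and that factor starts at the boundary
before `Xⱼ`). Descending through the acyclic grammar, every length-`k` factor of `w` is
therefore determined by a triple `(A, j, d)`, and there are `size * k` such triples.
-/

namespace List

variable {α : Type*}

theorem infix_flatten_cases {L : List (List α)} {v : List α} (hv : v ≠ [])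
    (h : v <:+: L.flatten) :
    (∃ u ∈ L, v <:+: u ∧ v.length < u.length) ∨
      ∃ j < L.length, ∃ l₁ l₂, v = l₁ ++ l₂ ∧ l₂ ≠ [] ∧
        l₁ <:+ (L.take j).flatten ∧ l₂ <+: (L.drop j).flatten := by
  induction L with
  | nil => exact absurd (infix_nil.mp h) hv
  | cons u L ih =>
    rw [flatten_cons, infix_append_iff_ne_nil] at h
    rcases h with hu | hL | ⟨l₁, l₂, -, hl₂, rfl, hl₁u, hl₂L⟩
    · rcases hu.length_le.lt_or_eq with hlt | heq
      · exact .inl ⟨u, mem_cons_self, hu, hlt⟩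
      · refine .inr ⟨0, by simp, [], v, by simp, hv, by simp, ?_⟩
        simp [hu.eq_of_length heq]
    · rcases ih hL with ⟨u', hu', hvu'⟩ | ⟨j, hj, l₁, l₂, hv, hl₂, hl₁, hl₂'⟩
      · exact .inl ⟨u', mem_cons_of_mem u hu', hvu'⟩
      · refine .inr ⟨j + 1, by simpa using hj, l₁, l₂, hv, hl₂, ?_, by simpa using hl₂'⟩
        simpa using hl₁.trans (suffix_append u _)
    · have hL : L ≠ [] := by rintro rfl; simp_all
      refine .inr ⟨1, by simpa [length_pos_iff] using hL, l₁, l₂, rfl, hl₂, ?_, ?_⟩ <;> simpa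

theorem eq_rtake_append_take_of_suffix_of_prefix {X Y l₁ l₂ : List α} {k : ℕ}
    (h₁ : l₁ <:+ X) (h₂ : l₂ <+: Y) (hk : (l₁ ++ l₂).length = k) :
    l₁ ++ l₂ = X.rtake l₁.length ++ Y.take (k - l₁.length) := by
  rw [← hk, length_append, Nat.add_sub_cancel_left, rtake, ← suffix_iff_eq_drop.mp h₁,
    ← prefix_iff_eq_take.mp h₂]

end List

namespace SLP

variable {α : Type} (G : SLP α)

def symVal : Fin G.n ⊕ α → List α
  | .inl j => G.val j
  | .inr a => [a]

def blocks (i : Fin G.n) : List (List α) := (G.rhs i).map G.symVal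

theorem val_eq_flatten_blocks (i : Fin G.n) : G.val i = (G.blocks i).flatten := by
  rw [val, blocks, ← List.attach_map_val (f := G.symVal)]
  congr 2
  funext ⟨s, hs⟩
  cases s <;> rfl

def anchoredFactor (k : ℕ) (x : (Σ i, Fin (G.rhs i).length) × Fin k) : List α :=
  ((G.blocks x.1.1).take x.1.2).flatten.rtake x.2 ++
    ((G.blocks x.1.1).drop x.1.2).flatten.take (k - x.2)

theorem mem_range_anchoredFactor_of_infix {k : ℕ} (hk : k ≠ 0) {v : List α}
    (hvk : v.length = k) (i : Fin G.n) (hv : v <:+: G.val i) :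
    v ∈ Set.range (G.anchoredFactor k) := by
  induction i using WellFoundedLT.induction with
  | ind i ih =>
  rw [val_eq_flatten_blocks] at hv
  rcases List.infix_flatten_cases (List.ne_nil_of_length_pos (by omega)) hv with
    ⟨u, hu, hvu, hlt⟩ | ⟨j, hj, l₁, l₂, rfl, hl₂, hl₁, hl₂'⟩
  · obtain ⟨s, hs, rfl⟩ := List.mem_map.mp hu
    rcases s with j | a
    · exact ih j (G.dec i j hs) hvu
    · simp only [symVal, List.length_singleton] at hlt
      omega
  · refine ⟨⟨⟨i, j, by simpa [blocks] using hj⟩, ⟨l₁.length, ?_⟩⟩, ?_⟩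
    · rw [← hvk, List.length_append]
      exact Nat.lt_add_of_pos_right (List.length_pos_iff.mpr hl₂)
    · exact (List.eq_rtake_append_take_of_suffix_of_prefix hl₁ hl₂' hvk).symm

theorem ncard_factors_le_size_mul {w : List α} (hw : G.produces w) {k : ℕ} (hk : k ≠ 0) :
    {v : List α | v.length = k ∧ v <:+: w}.ncard ≤ G.size * k := by
  calc {v : List α | v.length = k ∧ v <:+: w}.ncard
      ≤ (Set.range (G.anchoredFactor k)).ncard :=
        Set.ncard_le_ncard
          (fun v ⟨hvk, hv⟩ => G.mem_range_anchoredFactor_of_infix hk hvk _ (hw ▸ hv))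
          (Set.finite_range _)
    _ ≤ Nat.card ((Σ i, Fin (G.rhs i).length) × Fin k) := Finite.card_range_le _
    _ = G.size * k := by simp [size, Finset.sum_mul]

def ofList (w : List α) (hw : w ≠ []) : SLP α where
  n := 1
  rhs _ := w.map .inr
  start := 0
  dec _ _ h := by simp at h
  ne _ := by simpa using hw

theorem ofList_produces (w : List α) (hw : w ≠ []) : (ofList w hw).produces w := by
  rw [produces, val_eq_flatten_blocks]
  show ((w.map .inr).map (ofList w hw).symVal).flatten = w
  simpa [Function.comp_def, symVal, List.flatMap] using List.flatMap_singleton' w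

end SLP

theorem exists_produces_size_eq_gsize {α : Type} {w : List α} (hw : w ≠ []) :
    ∃ G : SLP α, G.produces w ∧ G.size = gsize w :=
  Nat.sInf_mem (s := {s | ∃ G : SLP α, G.produces w ∧ G.size = s})
    ⟨_, SLP.ofList w hw, SLP.ofList_produces w hw, rfl⟩

theorem repair_stmt_0_general {α : Type} (w : List α) (k : ℕ) (hk : 1 ≤ k) :
    {v : List α | v.length = k ∧ v <:+: w}.ncard ≤ gsize w * k := by
  rcases eq_or_ne w [] with rfl | hw
  · have hempty : {v : List α | v.length = k ∧ v <:+: []} = ∅ :=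
      Set.eq_empty_of_forall_notMem fun v ⟨hvk, hv⟩ => by simp_all; omega
    rw [hempty, Set.ncard_empty]
    exact Nat.zero_le _
  obtain ⟨G, hG, hsize⟩ := exists_produces_size_eq_gsize hw
  exact hsize ▸ G.ncard_factors_le_size_mul hG (by omega)

/-- A string `w` contains at most `g(w) * k` distinct factors of length `k`. -/
theorem repair_stmt_0 {α : Type} (w : List α) (hw : w ≠ []) (k : ℕ) (hk : 1 ≤ k) :
    {v : List α | v.length = k ∧ v <:+: w}.ncard ≤ gsize w * k :=
  repair_stmt_0_general w k hk
end

section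
/- Let h : {0,1}* → {0,1}* be the homomorphism with h(0)=01, h(1)=10, let B be a binary word in which every factor of length m occurs at most once, and let w = h(u) for some factor u of B. Then every factor of w of length 2m + 2 occurs at most once in w. -/
/-- The number of occurrences (starting positions) of `x` as a factor of `w`. -/
def countOcc {σ : Type} [DecidableEq σ] (x w : List σ) : ℕ :=
  ((List.range (w.length + 1)).filter (fun i => (w.drop i).take x.length = x)).length

/-- The homomorphism `h` with `h(0) = 01` and `h(1) = 10`, applied letter by letter
(`true` plays the role of `1`). -/
def hmap (u : List Bool) : List Bool :=
  u.flatMap (fun b => if b then [true, false] else [false, true])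

/-! A word `h(u)` splits into the blocks `c (!c)`, so a long factor of `h(u)` starting at an even
position is `h` of a factor of `u`, and one starting at an odd position contains such a factor
after dropping its first letter. Two occurrences of the same factor of length `2m + 2` at
positions of equal parity thus give two occurrences of a factor of length `m` of `u`. At positions
of different parity, the factor is both `h(x)` and `c h(y)`, which forces `x` to be constant, so
`x` minus one letter occurs at two consecutive positions of `u`. -/

def OccursAt {σ : Type} (x w : List σ) (i : ℕ) : Prop :=
  (w.drop i).take x.length = x

instance {σ : Type} [DecidableEq σ] (x w : List σ) (i : ℕ) : Decidable (OccursAt x w i) :=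
  inferInstanceAs (Decidable (_ = _))

def UniqueFactors {σ : Type} (k : ℕ) (w : List σ) : Prop :=
  ∀ x : List σ, x.length = k → ∀ i j, OccursAt x w i → OccursAt x w j → i = j

section OccursAt

variable {σ : Type} {x w : List σ} {i : ℕ}

theorem OccursAt.take (h : OccursAt x w i) (k : ℕ) : OccursAt (x.take k) w i := by
  unfold OccursAt at h ⊢
  conv_rhs => rw [← h]
  rw [List.take_take, List.length_take]

theorem OccursAt.drop (h : OccursAt x w i) (k : ℕ) : OccursAt (x.drop k) w (i + k) := by
  unfold OccursAt at h ⊢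
  conv_rhs => rw [← h]
  rw [List.drop_take, List.length_drop, List.drop_drop]

theorem OccursAt.length_le (h : OccursAt x w i) : x.length ≤ w.length - i := by
  have := congrArg List.length h
  simp only [List.length_take, List.length_drop] at this
  omega

theorem OccursAt.append_append (h : OccursAt x w i) (s t : List σ) :
    OccursAt x (s ++ w ++ t) (s.length + i) := by
  unfold OccursAt
  rw [List.append_assoc, List.drop_length_add_append, List.drop_append,
    List.take_append_of_le_length (by simpa using h.length_le)]
  exact h

theorem countOcc_le_one_iff [DecidableEq σ] (hx : x ≠ []) :
    countOcc x w ≤ 1 ↔ ∀ i j, OccursAt x w i → OccursAt x w j → i = j := by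
  have hcount : countOcc x w = ((Finset.range (w.length + 1)).filter (OccursAt x w)).card := rfl
  have hbound : ∀ {i}, OccursAt x w i → i < w.length + 1 := fun h => by
    have := h.length_le
    have := List.length_pos_iff.mpr hx
    omega
  rw [hcount, Finset.card_le_one]
  simp only [Finset.mem_filter, Finset.mem_range]
  exact ⟨fun h i j hi hj => h i ⟨hbound hi, hi⟩ j ⟨hbound hj, hj⟩,
    fun h i hi j hj => h i j hi.2 hj.2⟩

theorem uniqueFactors_iff_countOcc_le_one [DecidableEq σ] {k : ℕ} (hk : k ≠ 0) :
    UniqueFactors k w ↔ ∀ x : List σ, x.length = k → countOcc x w ≤ 1 := by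
  refine forall_congr' fun x => forall_congr' fun hx => (countOcc_le_one_iff ?_).symm
  rintro rfl
  exact hk hx.symm

theorem UniqueFactors.of_infix {k : ℕ} {u : List σ} (hw : UniqueFactors k w) (hu : u <:+: w) :
    UniqueFactors k u := by
  obtain ⟨s, t, rfl⟩ := hu
  intro x hx i j hi hj
  simpa using hw x hx _ _ (hi.append_append s t) (hj.append_append s t)

end OccursAt

@[simp] theorem hmap_nil : hmap [] = [] := rfl

theorem hmap_cons (c : Bool) (u : List Bool) : hmap (c :: u) = c :: (!c) :: hmap u := by
  cases c <;> rfl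

theorem hmap_length (u : List Bool) : (hmap u).length = 2 * u.length := by
  induction u with
  | nil => rfl
  | cons c u ih => simp only [hmap_cons, List.length_cons, ih]; ring

theorem hmap_injective : Function.Injective hmap := by
  intro x
  induction x with
  | nil => rintro (_ | ⟨c, y⟩) h <;> simp_all [hmap_cons]
  | cons c x ih =>
    rintro (_ | ⟨d, y⟩) h
    · simp [hmap_cons] at h
    · simp only [hmap_cons, List.cons.injEq] at h
      rw [h.1, ih h.2.2]

theorem drop_two_mul_hmap (u : List Bool) (a : ℕ) : (hmap u).drop (2 * a) = hmap (u.drop a) := by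
  induction u generalizing a with
  | nil => simp
  | cons c u ih =>
    cases a with
    | zero => simp
    | succ a => simpa [hmap_cons, Nat.mul_succ] using ih a

theorem take_two_mul_hmap (u : List Bool) (a : ℕ) : (hmap u).take (2 * a) = hmap (u.take a) := by
  induction u generalizing a with
  | nil => simp
  | cons c u ih =>
    cases a with
    | zero => simp
    | succ a => simp [hmap_cons, Nat.mul_succ, ih a]

theorem occursAt_hmap_two_mul_iff {x u : List Bool} {a : ℕ} :
    OccursAt (hmap x) (hmap u) (2 * a) ↔ OccursAt x u a := by
  unfold OccursAt
  rw [hmap_length, drop_two_mul_hmap, take_two_mul_hmap, hmap_injective.eq_iff]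

theorem exists_hmap_eq_of_occursAt_two_mul {u v : List Bool} {a k : ℕ}
    (h : OccursAt v (hmap u) (2 * a)) (hv : v.length = 2 * k) :
    ∃ x, hmap x = v ∧ OccursAt x u a := by
  have hx : hmap ((u.drop a).take k) = v := by
    rw [← take_two_mul_hmap, ← drop_two_mul_hmap, ← hv]
    exact h
  exact ⟨_, hx, occursAt_hmap_two_mul_iff.mp (hx ▸ h)⟩

theorem take_eq_replicate_of_hmap_prefix {c : Bool} {x y : List Bool}
    (h : hmap y <+: (!c) :: hmap x) : x.take y.length = List.replicate y.length c := by
  induction y generalizing x with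
  | nil => rfl
  | cons d y ih =>
    rcases x with _ | ⟨e, x⟩
    · simpa [hmap_cons, hmap_length] using h.length_le
    · rw [hmap_cons, hmap_cons, List.cons_prefix_cons, List.cons_prefix_cons] at h
      obtain ⟨rfl, rfl, h⟩ := h
      simp only [Bool.not_not] at h
      simp [ih h, List.replicate_succ]

section UniqueFactors

variable {u v : List Bool} {m : ℕ}

/-- Rounding an occurrence of `v` up to an even position exposes `h` of a factor of `u`. -/
theorem exists_occursAt_of_occursAt_hmap (hv : v.length = 2 * m + 2) {k : ℕ}
    (hk : OccursAt v (hmap u) k) :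
    ∃ x, x.length = m ∧ hmap x = (v.drop (k % 2)).take (2 * m) ∧ OccursAt x u ((k + 1) / 2) := by
  have hmid := (hk.drop (k % 2)).take (2 * m)
  rw [show k + k % 2 = 2 * ((k + 1) / 2) by omega] at hmid
  have hlen : ((v.drop (k % 2)).take (2 * m)).length = 2 * m := by
    simp only [List.length_take, List.length_drop]; omega
  obtain ⟨x, hx, hxu⟩ := exists_hmap_eq_of_occursAt_two_mul hmid hlen
  refine ⟨x, ?_, hx, hxu⟩
  have := congrArg List.length hx
  rw [hmap_length, hlen] at this
  omega

theorem UniqueFactors.eq_of_occursAt_hmap_of_mod_two_eq (hu : UniqueFactors m u)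
    (hv : v.length = 2 * m + 2) {i j : ℕ} (hi : OccursAt v (hmap u) i)
    (hj : OccursAt v (hmap u) j) (hij : i % 2 = j % 2) : i = j := by
  obtain ⟨x, hxm, hx, hxi⟩ := exists_occursAt_of_occursAt_hmap hv hi
  obtain ⟨y, -, hy, hyj⟩ := exists_occursAt_of_occursAt_hmap hv hj
  obtain rfl : x = y := hmap_injective (by rw [hx, hy, hij])
  have := hu x hxm _ _ hxi hyj
  omega

theorem UniqueFactors.not_occursAt_hmap_even_odd (hu : UniqueFactors m u)
    (hv : v.length = 2 * m + 2) {a b : ℕ} (hi : OccursAt v (hmap u) (2 * a))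
    (hj : OccursAt v (hmap u) (2 * b + 1)) : False := by
  obtain ⟨_ | ⟨c, x⟩, rfl, hxa⟩ := exists_hmap_eq_of_occursAt_two_mul hi (k := m + 1) hv
  · simp at hv
  have hxm : x.length = m := by simp only [hmap_length, List.length_cons] at hv; omega
  have hshift := (hj.drop 1).take (2 * m)
  rw [hmap_cons, List.drop_one, List.tail_cons, show 2 * b + 1 + 1 = 2 * (b + 1) by ring] at hshift
  have hlen : (((!c) :: hmap x).take (2 * m)).length = 2 * m := by
    simp only [List.length_take, List.length_cons, hmap_length]; omega
  obtain ⟨y, hy, -⟩ := exists_hmap_eq_of_occursAt_two_mul hshift hlen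
  have hym : y.length = m := by
    have := congrArg List.length hy
    rw [hmap_length, hlen] at this
    omega
  have hconst := take_eq_replicate_of_hmap_prefix (hy ▸ List.take_prefix _ _)
  rw [hym, List.take_of_length_le hxm.le] at hconst
  subst hconst
  have h0 := hxa.take m
  have h1 := hxa.drop 1
  rw [← List.replicate_succ, List.take_replicate, min_eq_left (by omega)] at h0
  rw [List.drop_one, List.tail_cons] at h1
  have := hu _ List.length_replicate _ _ h0 h1
  omega

theorem UniqueFactors.hmap (hu : UniqueFactors m u) : UniqueFactors (2 * m + 2) (hmap u) := by
  intro v hv i j hi hj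
  by_cases hij : i % 2 = j % 2
  · exact hu.eq_of_occursAt_hmap_of_mod_two_eq hv hi hj hij
  · exfalso
    obtain ⟨a, rfl | rfl⟩ := Nat.even_or_odd' i <;> obtain ⟨b, rfl | rfl⟩ := Nat.even_or_odd' j <;>
      try omega
    exacts [hu.not_occursAt_hmap_even_odd hv hi hj, hu.not_occursAt_hmap_even_odd hv hj hi]

end UniqueFactors

/-- If every factor of length `m` occurs at most once in `B` and `u` is a factor of `B`,
then every factor of length `2m + 2` occurs at most once in `h(u)`. -/
theorem repair_stmt_4 (m : ℕ) (hm : 1 ≤ m) (B u : List Bool)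
    (hB : ∀ x : List Bool, x.length = m → countOcc x B ≤ 1) (hu : u <:+: B) :
    ∀ v : List Bool, v.length = 2 * m + 2 → countOcc v (hmap u) ≤ 1 := by
  have hBm : UniqueFactors m B := (uniqueFactors_iff_countOcc_le_one (by omega)).mpr hB
  exact (uniqueFactors_iff_countOcc_le_one (by omega)).mp ((hBm.of_infix hu).hmap)
end

section
/- Let w ∈ {0,1}^{2k} start with 1, let N_i be the integer with binary representation w[1:k+i], and let s_k = (∏_{i=1}^{k-1} a^{N_i} b) a^{N_k}. Then there exists an SLP for s_k of size O(k); in particular g(s_k) ∈ O(k). -/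
/-- The value of a binary word (most significant bit first, `true` = 1). -/
def binVal (l : List Bool) : ℕ := l.foldl (fun acc b => 2 * acc + cond b 1 0) 0

/-- The word `a^{N 1} b a^{N 2} b ... b a^{N k}` over the alphabet `Fin 2`,
with `a = 0` and `b = 1`. -/
def blockWord (N : ℕ → ℕ) (k : ℕ) : List (Fin 2) :=
  ((List.range (k - 1)).flatMap (fun j => List.replicate (N (j + 1)) 0 ++ [1])) ++
    List.replicate (N k) 0

/-!
Each prefix value arises from the previous one by doubling and possibly adding one:
`binVal (w.take (j + 1)) = 2 * binVal (w.take j) + w[j]`. Hence the rules `X₀ → a` (correct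
because `w` starts with `1`) and `Xⱼ → Xⱼ₋₁ Xⱼ₋₁ a^{w[j]}` for `0 < j < 2k`, each of length at
most 3, make `Xⱼ` derive `a^{binVal (w.take (j + 1))}`. The start rule
`X_k b X_{k+1} b ⋯ b X_{2k-1}` of length `2k - 1` then derives `s_k`, for a total size below `8k`.
-/

theorem SLP.val_eq_flatMap {α : Type} (G : SLP α) (i : Fin G.n) :
    G.val i = (G.rhs i).flatMap (Sum.elim G.val fun a => [a]) := by
  rw [SLP.val, List.flatMap_def]
  congr 1
  conv_rhs => rw [← List.attach_map_val (l := G.rhs i)]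
  refine List.map_congr_left fun ⟨s, _⟩ _ => ?_
  cases s <;> rfl

theorem gsize_le_size {α : Type} {G : SLP α} {w : List α} (h : G.produces w) :
    gsize w ≤ G.size :=
  Nat.sInf_le ⟨G, h, rfl⟩

theorem binVal_append_singleton (l : List Bool) (c : Bool) :
    binVal (l ++ [c]) = 2 * binVal l + cond c 1 0 := by
  simp [binVal, List.foldl_append]

theorem binVal_take_succ {l : List Bool} {j : ℕ} (hj : j < l.length) :
    binVal (l.take (j + 1)) = 2 * binVal (l.take j) + cond (l.getD j false) 1 0 := by
  rw [List.take_add_one, List.getElem?_eq_getElem hj, Option.toList_some,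
    binVal_append_singleton, List.getD_eq_getElem _ _ hj]

namespace PrefixSLP

variable {α : Type} (a b : α) (k : ℕ) (w : List Bool)

def startRhs : List (Fin (2 * k + 1) ⊕ α) :=
  (List.finRange (k - 1)).flatMap (fun j => [.inl ⟨k + j, by omega⟩, .inr b]) ++
    [.inl ⟨2 * k - 1, by omega⟩]

def rhs (i : Fin (2 * k + 1)) : List (Fin (2 * k + 1) ⊕ α) :=
  if (i : ℕ) = 0 then [.inr a]
  else if (i : ℕ) < 2 * k then
    [.inl ⟨i - 1, by omega⟩, .inl ⟨i - 1, by omega⟩] ++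
      List.replicate (cond (w.getD i false) 1 0) (.inr a)
  else startRhs b k

theorem lt_of_inl_mem_rhs {i j : Fin (2 * k + 1)} (h : .inl j ∈ rhs a b k w i) :
    (j : ℕ) < i := by
  unfold rhs startRhs at h
  split_ifs at h with h0 hlt
  · simp at h
  · simp only [List.mem_append, List.mem_cons, List.mem_replicate, Sum.inl.injEq,
      List.not_mem_nil] at h
    rcases h with (rfl | rfl | h) | h <;> first | simp at h | (simp only; omega)
  · have hi : (i : ℕ) = 2 * k := by omega
    simp only [List.mem_append, List.mem_flatMap, List.mem_cons, Sum.inl.injEq,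
      List.not_mem_nil] at h
    rcases h with ⟨l, -, rfl | h | h⟩ | rfl | h <;> first | simp at h | (simp only; omega)

theorem rhs_last (hk : 1 ≤ k) : rhs a b k w (Fin.last (2 * k)) = startRhs b k := by
  rw [rhs, if_neg (by rw [Fin.val_last]; omega), if_neg (by simp)]

theorem rhs_ne_nil (i : Fin (2 * k + 1)) : rhs a b k w i ≠ [] := by
  unfold rhs startRhs
  split_ifs <;> simp

def slp : SLP α where
  n := 2 * k + 1
  rhs := rhs a b k w
  start := Fin.last (2 * k)
  dec _ _ := lt_of_inl_mem_rhs a b k w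
  ne := rhs_ne_nil a b k w

theorem val_eq (i : Fin (2 * k + 1)) :
    (slp a b k w).val i =
      (rhs a b k w i).flatMap (Sum.elim (fun j : Fin (2 * k + 1) => (slp a b k w).val j) ([·])) :=
  SLP.val_eq_flatMap (slp a b k w) i

theorem val_of_lt (hw : 2 * k ≤ w.length) (hh : w.headI = true) {j : ℕ} (hj : j < 2 * k) :
    (slp a b k w).val (⟨j, by omega⟩ : Fin (2 * k + 1)) =
      List.replicate (binVal (w.take (j + 1))) a := by
  induction j using Nat.strong_induction_on with
  | _ j ih =>
    rw [val_eq]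
    rcases Nat.eq_zero_or_pos j with rfl | hj0
    · obtain ⟨c, t, rfl⟩ := List.exists_cons_of_length_pos (by omega : 0 < w.length)
      cases hh
      simp [rhs, binVal]
    · have ih' := ih (j - 1) (by omega) (by omega)
      rw [Nat.sub_add_cancel hj0] at ih'
      simp only [rhs, Nat.pos_iff_ne_zero.mp hj0, hj, if_false, if_true, List.flatMap_append,
        List.flatMap_cons, List.flatMap_nil, List.flatMap_replicate, Sum.elim_inl, Sum.elim_inr,
        List.append_nil, ih', List.flatten_replicate_singleton, ← List.replicate_add,
        binVal_take_succ (by omega : j < w.length), two_mul (binVal (w.take j))]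

theorem produces_blockWord (hk : 1 ≤ k) (hw : 2 * k ≤ w.length) (hh : w.headI = true) :
    (slp 0 1 k w).produces (blockWord (fun i => binVal (w.take (k + i))) k) := by
  have hX (j : ℕ) (hj : j < 2 * k) := val_of_lt (0 : Fin 2) 1 k w hw hh hj
  change (slp 0 1 k w).val (Fin.last (2 * k)) = _
  rw [val_eq, rhs_last 0 1 k w hk, startRhs, blockWord, List.flatMap_append, List.flatMap_assoc,
    ← List.map_coe_finRange_eq_range, List.flatMap_map]
  congr 1
  · refine List.flatMap_congr fun j _ => ?_
    simp [hX (k + j) (by omega), Nat.add_assoc]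
  · simp [hX (2 * k - 1) (by omega), (by omega : 2 * k - 1 + 1 = k + k)]

theorem length_rhs_le_three {i : Fin (2 * k + 1)} (hi : (i : ℕ) < 2 * k) :
    (rhs a b k w i).length ≤ 3 := by
  unfold rhs
  split_ifs
  · simp
  · cases w.getD i false <;> simp

theorem size_le (hk : 1 ≤ k) : (slp a b k w).size ≤ 8 * k := by
  have hstart : (startRhs b k).length = 2 * (k - 1) + 1 := by
    simp [startRhs, List.length_flatMap, mul_comm]
  calc (slp a b k w).size
      = ∑ i : Fin (2 * k), (rhs a b k w i.castSucc).length + (startRhs b k).length := by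
        rw [← rhs_last a b k w hk]
        exact Fin.sum_univ_castSucc _
    _ ≤ ∑ _i : Fin (2 * k), 3 + (2 * (k - 1) + 1) :=
        Nat.add_le_add (Finset.sum_le_sum fun i _ => length_rhs_le_three a b k w i.isLt)
          hstart.le
    _ ≤ 8 * k := by
        simp only [Finset.sum_const, Finset.card_univ, Fintype.card_fin, smul_eq_mul]
        omega

end PrefixSLP

/-- For `w ∈ {0,1}^{2k}` starting with `1` and `N i` the value of the prefix `w[1:k+i]`,
the word `s_k = a^{N 1} b ⋯ b a^{N k}` admits an SLP of size `O(k)`;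
in particular `g(s_k) ∈ O(k)`. -/
theorem repair_stmt_6 :
    ∃ C : ℕ, 0 < C ∧ ∀ (k : ℕ) (w : List Bool), 2 ≤ k → w.length = 2 * k →
      w.headI = true →
      ∃ G : SLP (Fin 2),
        G.produces (blockWord (fun i => binVal (w.take (k + i))) k) ∧
        G.size ≤ C * k ∧
        gsize (blockWord (fun i => binVal (w.take (k + i))) k) ≤ C * k := by
  refine ⟨8, by norm_num, fun k w hk hw hh => ?_⟩
  have hG := PrefixSLP.produces_blockWord k w (by omega) hw.ge hh
  have hsize := PrefixSLP.size_le (0 : Fin 2) 1 k w (by omega)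
  exact ⟨_, hG, hsize, (gsize_le_size hG).trans hsize⟩
end

section
/- On a unary input a^m with m ≥ 4, RePair produces the rules X_1 → aa and X_i → X_{i−1}X_{i−1} for 2 ≤ i ≤ ⌊log₂ m⌋ − 1, together with a start rule S → X_{t}X_{t} f_t(b_t) f_{t−1}(b_{t−1}) ⋯ f_1(b_1) f_0(b_0) where t = ⌊log₂ m⌋ − 1, b_{⌊log m⌋}⋯b_1b_0 is the binary representation of m, f_0(1) = a, f_i(1) = X_i, and f_i(0) = ε. In particular the resulting SLP has size Θ(log m + ν(m)) where ν(m) is the number of ones in the binary representation of m. -/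
/-- Symbols appearing in RePair's grammars: nonterminals (numbered) or terminals. -/
abbrev RSym (α : Type) := ℕ ⊕ α

/-- A grammar in RePair's working representation: the list of right-hand sides, where the
rule at position `i` is the rule of nonterminal `i` and the start nonterminal is `0`. -/
abbrev Grammar (α : Type) := List (List (RSym α))

def countNOAux {σ : Type} [DecidableEq σ] (γ : List σ) : ℕ → List σ → ℕ
  | 0, _ => 0
  | fuel + 1, w =>
    if w = [] then 0
    else if γ <+: w then 1 + countNOAux γ fuel (w.drop γ.length)
    else countNOAux γ fuel w.tail

/-- The maximal number of pairwise non-overlapping occurrences of `γ` (with `|γ| ≥ 1`)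
in `w`, computed by the left-to-right greedy strategy. -/
def countNO {σ : Type} [DecidableEq σ] (γ w : List σ) : ℕ := countNOAux γ w.length w

def replaceNOAux {σ : Type} [DecidableEq σ] (γ : List σ) (X : σ) : ℕ → List σ → List σ
  | 0, w => w
  | _ + 1, [] => []
  | fuel + 1, s :: tl =>
    if γ <+: (s :: tl) then X :: replaceNOAux γ X fuel ((s :: tl).drop γ.length)
    else s :: replaceNOAux γ X fuel tl

/-- Replace the non-overlapping occurrences of `γ` in `w`, left to right, by `X`. -/
def replaceNO {σ : Type} [DecidableEq σ] (γ : List σ) (X : σ) (w : List σ) : List σ :=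
  replaceNOAux γ X w.length w

/-- The number of pairwise non-overlapping occurrences of `γ` in the right-hand sides. -/
def freq {α : Type} [DecidableEq α] (G : Grammar α) (γ : List (RSym α)) : ℕ :=
  (G.map (countNO γ)).sum

/-- `γ` is a maximal string of `G`: it has length at least two, occurs at least twice
without overlap, and no strictly longer word occurs at least as many times. -/
def IsMaxStr {α : Type} [DecidableEq α] (G : Grammar α) (γ : List (RSym α)) : Prop :=
  2 ≤ γ.length ∧ 2 ≤ freq G γ ∧ ∀ δ, γ.length < δ.length → freq G δ < freq G γ

/-- One round of RePair: pick a most frequent maximal string `γ`, replace its occurrences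
left to right by the fresh nonterminal `G.length`, and append the new rule `X → γ`. -/
def RePairStep {α : Type} [DecidableEq α] (G G' : Grammar α) : Prop :=
  ∃ γ, IsMaxStr G γ ∧ (∀ δ, IsMaxStr G δ → freq G δ ≤ freq G γ) ∧
    G' = (G.map (fun r => replaceNO γ (Sum.inl G.length) r)) ++ [γ]

/-- `RePairSteps r G G'`: `G'` is obtained from `G` by `r` rounds of RePair. -/
inductive RePairSteps {α : Type} [DecidableEq α] : ℕ → Grammar α → Grammar α → Prop
  | refl (G) : RePairSteps 0 G G
  | tail {n : ℕ} {G₁ G₂ G₃ : Grammar α} :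
      RePairSteps n G₁ G₂ → RePairStep G₂ G₃ → RePairSteps (n + 1) G₁ G₃

/-- The initial grammar `S → w`. -/
def RePairInit {α : Type} (w : List α) : Grammar α := [w.map Sum.inr]

/-- `G` is an output of RePair on input `w`: reachable from `S → w` by rounds of RePair,
with no maximal string left. -/
def RePairRun {α : Type} [DecidableEq α] (w : List α) (G : Grammar α) : Prop :=
  (∃ n, RePairSteps n (RePairInit w) G) ∧ ∀ γ, ¬ IsMaxStr G γ

/-- The size of a grammar: total length of all right-hand sides. -/
def gramSize {α : Type} (G : Grammar α) : ℕ := (G.map List.length).sum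

/-!
After `k` rounds on `a^m`, the grammar consists of the rules `X_{j+1} → X_j X_j` for `j < k`
(with `X_0 = a`) and the start rule `X_k^q` followed by the symbols `X_i` for the set bits
`i < k` of `m`, where `q = ⌊m / 2^k⌋`. A symbol other than `X_k` occurs at most once in the
start rule and at most three times in the grammar, so every word other than a power of `X_k`
occurs at most once without overlap, while `X_k^j` occurs `⌊q / j⌋` times. Hence while `q ≥ 4`
the unique most frequent maximal string is `X_k X_k`, and replacing it gives the grammar of
round `k + 1`; once `q ≤ 3`, i.e. at `k = ⌊log₂ m⌋ - 1`, no maximal string is left.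
-/

section Greedy

variable {σ : Type} [DecidableEq σ]

private theorem countNOAux_mul_count_le (γ : List σ) (s : σ) :
    ∀ fuel w, countNOAux γ fuel w * γ.count s ≤ w.count s := by
  intro fuel
  induction fuel with
  | zero => simp [countNOAux]
  | succ n ih =>
    intro w
    rw [countNOAux]
    split_ifs with hw hpre
    · simp
    · obtain ⟨r, rfl⟩ := hpre
      have := ih r
      rw [List.drop_left, List.count_append]
      linarith
    · exact (ih w.tail).trans ((List.tail_sublist w).count_le s)

theorem countNO_mul_count_le (γ w : List σ) (s : σ) :
    countNO γ w * γ.count s ≤ w.count s :=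
  countNOAux_mul_count_le γ s _ w

theorem countNO_le_count {γ : List σ} (w : List σ) {s : σ} (hs : s ∈ γ) :
    countNO γ w ≤ w.count s :=
  (Nat.le_mul_of_pos_right _ (List.count_pos_iff.mpr hs)).trans (countNO_mul_count_le γ w s)

theorem countNO_replicate_append {x : σ} {j : ℕ} (hj : 0 < j) (q : ℕ) {tail : List σ}
    (hx : x ∉ tail) : countNO (List.replicate j x) (List.replicate q x ++ tail) = q / j := by
  have hcount : ∀ q, (List.replicate q x ++ tail).count x = q := fun q => by
    simp [List.count_eq_zero_of_not_mem hx]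
  suffices ∀ fuel q, q + tail.length ≤ fuel →
      countNOAux (List.replicate j x) fuel (List.replicate q x ++ tail) = q / j from
    this _ q (by simp)
  intro fuel
  induction fuel with
  | zero => intro q hq; simp [countNOAux, show q = 0 by omega]
  | succ n ih =>
    intro q hq
    by_cases hjq : j ≤ q
    · have hpre : List.replicate j x <+: List.replicate q x ++ tail :=
        ⟨List.replicate (q - j) x ++ tail, by
          rw [← List.append_assoc, ← List.replicate_add, Nat.add_sub_cancel' hjq]⟩
      have hne : List.replicate q x ++ tail ≠ [] :=
        List.ne_nil_of_length_pos (by rw [List.length_append, List.length_replicate]; omega)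
      rw [countNOAux, if_neg hne, if_pos hpre, List.length_replicate,
        List.drop_append_of_le_length (by simpa), List.drop_replicate, ih _ (by omega),
        Nat.div_eq_sub_div hj hjq, add_comm]
    · -- fewer than `j` copies of `x` are left, so not even one occurrence fits
      have h := countNOAux_mul_count_le (List.replicate j x) x (n + 1) (List.replicate q x ++ tail)
      rw [hcount, List.count_replicate_self] at h
      rw [Nat.div_eq_of_lt (by omega)]
      by_contra h0
      nlinarith [Nat.pos_of_ne_zero h0]

private theorem replaceNOAux_eq_self_of_count_lt {γ : List σ} (y : σ) {s : σ} :
    ∀ fuel w, w.count s < γ.count s → replaceNOAux γ y fuel w = w := by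
  intro fuel
  induction fuel with
  | zero => intro w _; rfl
  | succ n ih =>
    rintro (_ | ⟨a, tl⟩) h
    · rfl
    · have hpre : ¬ γ <+: a :: tl := fun hpre => (hpre.sublist.count_le s).not_gt h
      rw [replaceNOAux, if_neg hpre,
        ih tl ((List.sublist_cons_self a tl |>.count_le s).trans_lt h)]

theorem replaceNO_eq_self_of_count_lt {γ w : List σ} (y : σ) {s : σ}
    (h : w.count s < γ.count s) : replaceNO γ y w = w :=
  replaceNOAux_eq_self_of_count_lt y _ w h

theorem replaceNO_replicate_append {x : σ} (y : σ) {j : ℕ} (hj : 0 < j) (q : ℕ)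
    {tail : List σ} (hx : x ∉ tail) :
    replaceNO (List.replicate j x) y (List.replicate q x ++ tail)
      = List.replicate (q / j) y ++ List.replicate (q % j) x ++ tail := by
  suffices ∀ fuel q, q + tail.length ≤ fuel →
      replaceNOAux (List.replicate j x) y fuel (List.replicate q x ++ tail)
        = List.replicate (q / j) y ++ List.replicate (q % j) x ++ tail from
    this _ q (by simp)
  intro fuel
  induction fuel with
  | zero =>
    intro q hq
    obtain ⟨rfl, rfl⟩ : q = 0 ∧ tail = [] := by simpa using hq
    simp [replaceNOAux]
  | succ n ih =>
    intro q hq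
    by_cases hjq : j ≤ q
    · obtain ⟨q', rfl⟩ : ∃ q', q = q' + 1 := ⟨q - 1, by omega⟩
      have hpre : List.replicate j x <+: List.replicate (q' + 1) x ++ tail :=
        ⟨List.replicate (q' + 1 - j) x ++ tail, by
          rw [← List.append_assoc, ← List.replicate_add, Nat.add_sub_cancel' hjq]⟩
      have hdrop : (List.replicate (q' + 1) x ++ tail).drop j
          = List.replicate (q' + 1 - j) x ++ tail := by
        rw [List.drop_append_of_le_length (by simpa), List.drop_replicate]
      rw [List.replicate_succ, List.cons_append] at hpre hdrop ⊢
      rw [replaceNOAux, if_pos hpre, List.length_replicate, hdrop, ih _ (by omega),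
        Nat.div_eq_sub_div hj hjq, Nat.mod_eq_sub_mod hjq, List.replicate_succ]
      simp
    · have hcount : (List.replicate q x ++ tail).count x < (List.replicate j x).count x := by
        simp only [List.count_append, List.count_replicate_self,
          List.count_eq_zero_of_not_mem hx, add_zero]
        omega
      rw [replaceNOAux_eq_self_of_count_lt y _ _ hcount, Nat.div_eq_of_lt (by omega),
        Nat.mod_eq_of_lt (by omega)]
      simp

end Greedy

-- `List.count` on `RSym α` must use the `BEq` instance from `DecidableEq`, as `countNO` does.
attribute [-instance] Sum.instBEq

theorem freq_mul_count_le {α : Type} [DecidableEq α] (G : Grammar α) (γ : List (RSym α))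
    (s : RSym α) : freq G γ * γ.count s ≤ (G.map (List.count s)).sum := by
  rw [freq, ← List.sum_map_mul_right]
  exact List.sum_le_sum fun w _ => countNO_mul_count_le γ w s

/-- `sym i` is `X_i` for `i ≥ 1` and the terminal `a = X_0` for `i = 0` (nonterminal `0` is the
start symbol). -/
def sym (i : ℕ) : RSym Unit := if i = 0 then Sum.inr () else Sum.inl i

theorem sym_injective : Function.Injective sym := by
  intro i j h
  unfold sym at h
  split_ifs at h <;> simp_all

/-- The paper's `f_{k-1}(b_{k-1}) ⋯ f_0(b_0)`. -/
def bitsWord (m k : ℕ) : List (RSym Unit) :=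
  ((List.range k).reverse.filter m.testBit).map sym

def startRule (m k : ℕ) : List (RSym Unit) :=
  List.replicate (m / 2 ^ k) (sym k) ++ bitsWord m k

def repairStage (m k : ℕ) : Grammar Unit :=
  startRule m k :: (List.range k).map fun j => [sym j, sym j]

theorem bitsWord_succ (m k : ℕ) :
    bitsWord m (k + 1) = (if m.testBit k then [sym k] else []) ++ bitsWord m k := by
  simp only [bitsWord, List.range_succ, List.reverse_append, List.filter_append]
  split_ifs with h <;> simp [h]

theorem nodup_bitsWord (m k : ℕ) : (bitsWord m k).Nodup :=
  ((List.nodup_reverse.mpr List.nodup_range).filter _).map sym_injective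

theorem sym_not_mem_bitsWord (m k : ℕ) : sym k ∉ bitsWord m k := by
  simp only [bitsWord, List.mem_map, List.mem_filter, List.mem_reverse, List.mem_range]
  rintro ⟨i, ⟨hi, -⟩, h⟩
  exact hi.ne (sym_injective h)

theorem count_startRule_le_one (m k : ℕ) {s : RSym Unit} (hs : s ≠ sym k) :
    (startRule m k).count s ≤ 1 := by
  simp only [startRule, List.count_append, List.count_replicate, beq_iff_eq, Ne.symm hs,
    if_false, zero_add]
  exact List.nodup_iff_count_le_one.mp (nodup_bitsWord m k) s

theorem sum_count_repairStage_le_three (m k : ℕ) {s : RSym Unit} (hs : s ≠ sym k) :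
    ((repairStage m k).map (List.count s)).sum ≤ 3 := by
  have hrules : ((List.range k).map fun j => [sym j, sym j].count s).sum
      = 2 * ((List.range k).map sym).count s := by
    clear hs
    induction k with
    | zero => rfl
    | succ n ih =>
      simp only [List.range_succ, List.map_append, List.sum_append, List.count_append, ih]
      simp only [List.count_cons, List.count_nil, List.map_cons, List.map_nil, List.sum_cons,
        List.sum_nil]
      omega
  have hsym : ((List.range k).map sym).count s ≤ 1 :=
    List.nodup_iff_count_le_one.mp (List.nodup_range.map sym_injective) s
  have hstart := count_startRule_le_one m k hs
  simp only [repairStage, List.map_cons, List.map_map, List.sum_cons, Function.comp_def, hrules]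
  omega

theorem freq_repairStage (m k : ℕ) (γ : List (RSym Unit)) :
    freq (repairStage m k) γ
      = countNO γ (startRule m k)
        + ((List.range k).map fun j => countNO γ [sym j, sym j]).sum := by
  simp [freq, repairStage, Function.comp_def]

theorem freq_repairStage_replicate (m k : ℕ) {j : ℕ} (hj : 0 < j) :
    freq (repairStage m k) (List.replicate j (sym k)) = m / 2 ^ k / j := by
  have hrules : ∀ i ∈ List.range k, countNO (List.replicate j (sym k)) [sym i, sym i] = 0 := by
    intro i hi
    have hne : sym i ≠ sym k := fun h => (List.mem_range.mp hi).ne (sym_injective h)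
    simpa [List.count_cons, hne] using
      countNO_le_count [sym i, sym i] (List.mem_replicate.mpr ⟨hj.ne', rfl⟩ : sym k ∈ _)
  rw [freq_repairStage, List.sum_eq_zero (by simpa using hrules), startRule,
    countNO_replicate_append hj _ (sym_not_mem_bitsWord m k), add_zero]

theorem freq_repairStage_le_one (m k : ℕ) {γ : List (RSym Unit)} (hγ : 2 ≤ γ.length)
    {s : RSym Unit} (hs : s ∈ γ) (hsk : s ≠ sym k) : freq (repairStage m k) γ ≤ 1 := by
  by_cases hmult : 2 ≤ γ.count s
  · -- `s` occurs at most three times in the whole grammar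
    have := freq_mul_count_le (repairStage m k) γ s
    have := sum_count_repairStage_le_three m k hsk
    nlinarith
  · -- `γ` contains a second symbol `b ≠ s`, and no rule `X_j X_j` contains both
    obtain ⟨b, hb, hbs⟩ : ∃ b ∈ γ, b ≠ s := by
      by_contra! h
      have := List.eq_replicate_iff.mpr ⟨rfl, h⟩
      rw [this, List.count_replicate_self] at hmult
      omega
    have hrules : ∀ i ∈ List.range k, countNO γ [sym i, sym i] = 0 := by
      intro i _
      by_cases hi : s = sym i
      · simpa [List.count_cons, hi ▸ hbs.symm] using countNO_le_count [sym i, sym i] hb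
      · simpa [List.count_cons, Ne.symm hi] using countNO_le_count [sym i, sym i] hs
    rw [freq_repairStage, List.sum_eq_zero (by simpa using hrules), add_zero]
    exact (countNO_le_count _ hs).trans (count_startRule_le_one m k hsk)

theorem eq_replicate_of_two_le_freq {m k : ℕ} {γ : List (RSym Unit)} (hγ : 2 ≤ γ.length)
    (hf : 2 ≤ freq (repairStage m k) γ) : γ = List.replicate γ.length (sym k) := by
  refine List.eq_replicate_iff.mpr ⟨rfl, fun s hs => ?_⟩
  by_contra hsk
  have := freq_repairStage_le_one m k hγ hs hsk
  omega

theorem freq_repairStage_of_two_le {m k : ℕ} {γ : List (RSym Unit)} (hγ : 2 ≤ γ.length)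
    (hf : 2 ≤ freq (repairStage m k) γ) : freq (repairStage m k) γ = m / 2 ^ k / γ.length := by
  rw [eq_replicate_of_two_le_freq hγ hf, List.length_replicate,
    freq_repairStage_replicate m k (by omega)]

theorem freq_repairStage_pair (m k : ℕ) :
    freq (repairStage m k) [sym k, sym k] = m / 2 ^ k / 2 :=
  freq_repairStage_replicate m k two_pos

theorem isMaxStr_repairStage_pair {m k : ℕ} (hq : 4 ≤ m / 2 ^ k) :
    IsMaxStr (repairStage m k) [sym k, sym k] := by
  rw [IsMaxStr, freq_repairStage_pair]
  refine ⟨le_rfl, by omega, fun δ hδ => ?_⟩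
  by_cases hf : 2 ≤ freq (repairStage m k) δ
  · rw [freq_repairStage_of_two_le hδ.le hf]
    calc m / 2 ^ k / δ.length ≤ m / 2 ^ k / 3 := Nat.div_le_div_left hδ (by norm_num)
      _ < m / 2 ^ k / 2 := by omega
  · omega

theorem not_isMaxStr_repairStage {m k : ℕ} (hq : m / 2 ^ k < 4) (γ : List (RSym Unit)) :
    ¬ IsMaxStr (repairStage m k) γ := by
  rintro ⟨hγ, hf, -⟩
  have hle : m / 2 ^ k / γ.length ≤ m / 2 ^ k / 2 := Nat.div_le_div_left hγ two_pos
  rw [freq_repairStage_of_two_le hγ hf] at hf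
  omega

theorem eq_pair_of_isMaxStr_of_length_le {m k : ℕ} {γ : List (RSym Unit)}
    (hγ : IsMaxStr (repairStage m k) γ) (hlen : γ.length ≤ 2) : γ = [sym k, sym k] := by
  rw [eq_replicate_of_two_le_freq hγ.1 hγ.2.1, le_antisymm hlen hγ.1]
  rfl

theorem eq_pair_of_isMaxStr {m k : ℕ} (hq : 4 ≤ m / 2 ^ k) {γ : List (RSym Unit)}
    (hγ : IsMaxStr (repairStage m k) γ)
    (hmost : freq (repairStage m k) [sym k, sym k] ≤ freq (repairStage m k) γ) :
    γ = [sym k, sym k] := by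
  refine eq_pair_of_isMaxStr_of_length_le hγ (not_lt.mp fun hlen => ?_)
  exact (hmost.trans_lt ((isMaxStr_repairStage_pair hq).2.2 γ hlen)).false

theorem replaceNO_startRule (m k : ℕ) :
    replaceNO [sym k, sym k] (sym (k + 1)) (startRule m k) = startRule m (k + 1) := by
  have hdiv : m / 2 ^ (k + 1) = m / 2 ^ k / 2 := by rw [pow_succ, Nat.div_div_eq_div_mul]
  have hbit : (if m.testBit k then [sym k] else []) = List.replicate (m / 2 ^ k % 2) (sym k) := by
    rw [Nat.testBit_eq_decide_div_mod_eq]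
    rcases Nat.mod_two_eq_zero_or_one (m / 2 ^ k) with h | h <;> simp [h]
  rw [startRule, startRule, bitsWord_succ, hbit, hdiv, ← List.append_assoc]
  exact replaceNO_replicate_append (sym (k + 1)) two_pos _ (sym_not_mem_bitsWord m k)

theorem repairStage_step (m k : ℕ) :
    (repairStage m k).map (replaceNO [sym k, sym k] (Sum.inl (repairStage m k).length))
      ++ [[sym k, sym k]] = repairStage m (k + 1) := by
  have hX : (Sum.inl (repairStage m k).length : RSym Unit) = sym (k + 1) := by
    simp [repairStage, sym]
  have hrules : ∀ j ∈ List.range k,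
      replaceNO [sym k, sym k] (sym (k + 1)) [sym j, sym j] = [sym j, sym j] := by
    intro j hj
    have hne : sym j ≠ sym k := fun h => (List.mem_range.mp hj).ne (sym_injective h)
    exact replaceNO_eq_self_of_count_lt _ (s := sym k) (by simp [hne])
  rw [hX, repairStage, repairStage, List.map_cons, replaceNO_startRule, List.map_map,
    List.range_succ, List.map_append]
  exact congrArg (fun rules => startRule m (k + 1) :: (rules ++ _)) (List.map_congr_left hrules)

theorem repairStep_repairStage_iff {m k : ℕ} (hq : 4 ≤ m / 2 ^ k) (G : Grammar Unit) :
    RePairStep (repairStage m k) G ↔ G = repairStage m (k + 1) := by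
  have hpair := isMaxStr_repairStage_pair hq
  constructor
  · rintro ⟨γ, hγ, hmost, rfl⟩
    rw [eq_pair_of_isMaxStr hq hγ (hmost _ hpair)]
    exact repairStage_step m k
  · rintro rfl
    refine ⟨_, hpair, fun δ hδ => ?_, (repairStage_step m k).symm⟩
    by_cases hlen : 2 < δ.length
    · exact (hpair.2.2 δ hlen).le
    · rw [eq_pair_of_isMaxStr_of_length_le hδ (not_lt.mp hlen)]

theorem RePairSteps.eq_repairStage {m n : ℕ} {G : Grammar Unit}
    (h : RePairSteps n (repairStage m 0) G) :
    (∀ k < n, 4 ≤ m / 2 ^ k) ∧ G = repairStage m n := by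
  generalize hG₀ : repairStage m 0 = G₀ at h
  induction h with
  | refl => exact ⟨fun k hk => absurd hk k.not_lt_zero, hG₀.symm⟩
  | @tail p _ _ _ _ hstep ih =>
    obtain ⟨hbig, rfl⟩ := ih hG₀
    have hq : 4 ≤ m / 2 ^ p := by
      by_contra! hq
      obtain ⟨γ, hγ, -⟩ := hstep
      exact not_isMaxStr_repairStage hq γ hγ
    refine ⟨fun k hk => ?_, (repairStep_repairStage_iff hq _).mp hstep⟩
    rcases Nat.lt_succ_iff_lt_or_eq.mp hk with hk | rfl
    exacts [hbig k hk, hq]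

theorem repairSteps_repairStage {m : ℕ} :
    ∀ n, (∀ k < n, 4 ≤ m / 2 ^ k) → RePairSteps n (repairStage m 0) (repairStage m n)
  | 0, _ => .refl _
  | n + 1, hbig =>
    .tail (repairSteps_repairStage n fun k hk => hbig k (by omega))
      ((repairStep_repairStage_iff (hbig n n.lt_succ_self) _).mpr rfl)

theorem repairInit_replicate (m : ℕ) : RePairInit (List.replicate m ()) = repairStage m 0 := by
  simp [RePairInit, repairStage, startRule, bitsWord, sym, List.map_replicate]

theorem four_le_div_pow_of_lt_log_sub_one {m k : ℕ} (hk : k < Nat.log 2 m - 1) :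
    4 ≤ m / 2 ^ k := by
  have hlog : 2 ≤ Nat.log 2 (m / 2 ^ k) := by rw [Nat.log_div_base_pow]; omega
  exact Nat.pow_le_of_le_log (fun h => by simp [h] at hlog) hlog

theorem div_pow_log_sub_one_lt_four (m : ℕ) : m / 2 ^ (Nat.log 2 m - 1) < 4 := by
  have hlog : Nat.log 2 (m / 2 ^ (Nat.log 2 m - 1)) < 2 := by rw [Nat.log_div_base_pow]; omega
  simpa using Nat.lt_pow_of_log_lt one_lt_two hlog

theorem repairRun_replicate_iff (m : ℕ) (G : Grammar Unit) :
    RePairRun (List.replicate m ()) G ↔ G = repairStage m (Nat.log 2 m - 1) := by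
  rw [RePairRun, repairInit_replicate]
  constructor
  · rintro ⟨⟨n, hsteps⟩, hnomax⟩
    obtain ⟨hbig, rfl⟩ := hsteps.eq_repairStage
    have hsmall : m / 2 ^ n < 4 := by
      by_contra! hq
      exact hnomax _ (isMaxStr_repairStage_pair hq)
    congr 1
    rcases lt_trichotomy n (Nat.log 2 m - 1) with h | h | h
    · exact absurd (four_le_div_pow_of_lt_log_sub_one h) (by omega)
    · exact h
    · exact absurd (hbig _ h) (by have := div_pow_log_sub_one_lt_four m; omega)
  · rintro rfl
    exact ⟨⟨_, repairSteps_repairStage _ fun _ hk => four_le_div_pow_of_lt_log_sub_one hk⟩,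
      not_isMaxStr_repairStage (div_pow_log_sub_one_lt_four m)⟩

theorem two_le_div_pow_log_sub_one {m : ℕ} (hm : 2 ≤ m) : 2 ≤ m / 2 ^ (Nat.log 2 m - 1) := by
  have hlog : Nat.log 2 m - 1 + 1 = Nat.log 2 m := Nat.sub_add_cancel (Nat.log_pos one_lt_two hm)
  rw [Nat.le_div_iff_mul_le (by positivity), ← pow_succ', hlog]
  exact Nat.pow_log_le_self 2 (by omega)

theorem startRule_eq_of_lt_four {m k : ℕ} (h2 : 2 ≤ m / 2 ^ k) (h4 : m / 2 ^ k < 4) :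
    startRule m k = [sym k, sym k] ++ bitsWord m (k + 1) := by
  obtain h | h : m / 2 ^ k = 2 ∨ m / 2 ^ k = 3 := by omega
  all_goals simp [startRule, bitsWord_succ, Nat.testBit_eq_decide_div_mod_eq, h]

theorem bitsWord_eq_flatMap (m k : ℕ) :
    bitsWord m k = (List.range k).reverse.flatMap fun i => if m.testBit i then [sym i] else [] := by
  rw [bitsWord]
  induction (List.range k).reverse with
  | nil => rfl
  | cons i l ih => by_cases h : m.testBit i <;> simp [h, ih]

theorem count_one_digits_two_eq (n : ℕ) :
    (Nat.digits 2 n).count 1 = n % 2 + (Nat.digits 2 (n / 2)).count 1 := by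
  rcases Nat.eq_zero_or_pos n with rfl | hn
  · simp
  · rw [Nat.digits_def' one_lt_two hn, List.count_cons]
    rcases Nat.mod_two_eq_zero_or_one n with h | h <;> simp [h, add_comm]

theorem count_one_digits_two_eq_length_bitsWord (m k : ℕ) :
    (Nat.digits 2 m).count 1 = (bitsWord m k).length + (Nat.digits 2 (m / 2 ^ k)).count 1 := by
  induction k with
  | zero => simp [bitsWord]
  | succ k ih =>
    rw [ih, count_one_digits_two_eq (m / 2 ^ k), bitsWord_succ, Nat.div_div_eq_div_mul,
      ← pow_succ, List.length_append, Nat.testBit_eq_decide_div_mod_eq]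
    rcases Nat.mod_two_eq_zero_or_one (m / 2 ^ k) with h | h
    · simp [h]
    · simp only [h, decide_true, ↓reduceIte, List.length_cons, List.length_nil, zero_add]
      omega

theorem gramSize_repairStage (m k : ℕ) :
    gramSize (repairStage m k) = m / 2 ^ k + (bitsWord m k).length + 2 * k := by
  simp [gramSize, repairStage, startRule, Function.comp_def, mul_comm]

theorem gramSize_repairStage_log_sub_one {m : ℕ} (hm : 2 ≤ m) :
    gramSize (repairStage m (Nat.log 2 m - 1))
      = 2 * (Nat.log 2 m - 1) + (Nat.digits 2 m).count 1 + 1 := by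
  rw [gramSize_repairStage, count_one_digits_two_eq_length_bitsWord m (Nat.log 2 m - 1)]
  have h2 := two_le_div_pow_log_sub_one hm
  have h4 := div_pow_log_sub_one_lt_four m
  obtain h | h : m / 2 ^ (Nat.log 2 m - 1) = 2 ∨ m / 2 ^ (Nat.log 2 m - 1) = 3 := by omega
  all_goals rw [h]; norm_num; omega

theorem repairStage_log_sub_one_eq {m : ℕ} (hm : 4 ≤ m) :
    repairStage m (Nat.log 2 m - 1)
      = (([Sum.inl (Nat.log 2 m - 1), Sum.inl (Nat.log 2 m - 1)] ++
            (List.range (Nat.log 2 m - 1 + 1)).reverse.flatMap (fun i =>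
              if Nat.testBit m i then
                [if i = 0 then (Sum.inr () : RSym Unit) else Sum.inl i]
              else [])) ::
          (List.range (Nat.log 2 m - 1)).map (fun j =>
            if j = 0 then ([Sum.inr (), Sum.inr ()] : List (RSym Unit))
            else [Sum.inl j, Sum.inl j])) := by
  have ht : Nat.log 2 m - 1 ≠ 0 := by
    have := Nat.le_log_of_pow_le one_lt_two (show 2 ^ 2 ≤ m from hm)
    omega
  rw [repairStage, startRule_eq_of_lt_four (two_le_div_pow_log_sub_one (by omega))
    (div_pow_log_sub_one_lt_four m), bitsWord_eq_flatMap]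
  simp only [sym, ht, if_false]
  congr 2
  funext j
  split_ifs <;> rfl

/-- On unary input `a^m` with `m ≥ 4` and `t = ⌊log₂ m⌋ - 1`, RePair outputs exactly the
rules `X 1 → aa`, `X i → X (i-1) X (i-1)` for `2 ≤ i ≤ t`, and the start rule
`S → X t · X t · f t (b t) ⋯ f 1 (b 1) f 0 (b 0)` where `b j` is the `j`-th binary digit
of `m`, `f 0 1 = a`, `f i 1 = X i` and `f i 0 = ε`; the output size is
`2t + ν(m) + 1 ∈ Θ(log m + ν(m))`, where `ν(m)` is the number of ones in the binary
representation of `m`. -/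
theorem repair_stmt_11 (m : ℕ) (hm : 4 ≤ m) :
    (∃ G : Grammar Unit, RePairRun (List.replicate m ()) G) ∧
    (∀ G : Grammar Unit, RePairRun (List.replicate m ()) G →
      G = (([Sum.inl (Nat.log 2 m - 1), Sum.inl (Nat.log 2 m - 1)] ++
            (List.range (Nat.log 2 m - 1 + 1)).reverse.flatMap (fun i =>
              if Nat.testBit m i then
                [if i = 0 then (Sum.inr () : RSym Unit) else Sum.inl i]
              else [])) ::
          (List.range (Nat.log 2 m - 1)).map (fun j =>
            if j = 0 then ([Sum.inr (), Sum.inr ()] : List (RSym Unit))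
            else [Sum.inl j, Sum.inl j]))) ∧
    (∀ G : Grammar Unit, RePairRun (List.replicate m ()) G →
      gramSize G = 2 * (Nat.log 2 m - 1) + (Nat.digits 2 m).count 1 + 1) := by
  have hrun := repairRun_replicate_iff m
  refine ⟨⟨_, (hrun _).mpr rfl⟩, fun G hG => ?_, fun G hG => ?_⟩
  · rw [(hrun G).mp hG, repairStage_log_sub_one_eq hm]
  · rw [(hrun G).mp hG, gramSize_repairStage_log_sub_one (by omega)]
end

section
/- Suppose a word u over an alphabet Γ contains k pairwise disjoint factors v_1, …, v_k such that the combined multiset of factors of length ℓ of the v_i contains at least D distinct words each occurring exactly once. Then the number of distinct factors of length ℓ of u is at least D, and any SLP for u has size at least D/ℓ. -/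
/-!
Every occurrence of a nonempty factor `x` in `val i = flatten (map val (rhs i))` either lies
strictly inside the expansion of one right-hand-side symbol, hence inside `val j` for a
smaller nonterminal `j`, or covers the first letter of the expansion of some symbol. Descending
through the grammar, every factor of length `ℓ` of the produced word is therefore read off from
`val j` at one of the `|rhs j| * ℓ` windows of length `ℓ` covering the start of a symbol of
`rhs j`, so there are at most `size * ℓ` of them. The `D` words of `S` occur in the `v i`,
hence in `u`, which gives both bounds.
-/

namespace List

variable {α : Type}

theorem take_drop_infix (w : List α) (a n : ℕ) : (w.drop a).take n <:+: w :=
  ((w.drop a).take_prefix n).isInfix.trans (w.drop_suffix a).isInfix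

theorem finite_setOf_infix (u : List α) : {x | x <:+: u}.Finite :=
  u.sublists.finite_toSet.subset fun _ hx => mem_sublists.2 hx.sublist

theorem infix_of_countOcc_ne_zero [DecidableEq α] {x w : List α} (h : countOcc x w ≠ 0) :
    x <:+: w := by
  obtain ⟨a, ha⟩ := exists_mem_of_length_pos (Nat.pos_of_ne_zero h)
  have hwin : (w.drop a).take x.length = x := by simpa using (mem_filter.1 ha).2
  exact hwin ▸ take_drop_infix w a x.length

theorem infix_tail_of_infix_of_not_prefix {x b : List α} (h : x <:+: b) (hp : ¬x <+: b) :
    x <:+: b.tail := by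
  cases b with
  | nil => exact absurd (eq_nil_of_infix_nil h ▸ nil_prefix) hp
  | cons c b => exact (infix_cons_iff.1 h).resolve_left hp

theorem infix_flatten_cases_s16 (L : List (List α)) {x : List α} (hx : x ≠ [])
    (h : x <:+: L.flatten) :
    (∃ b ∈ L, x <:+: b.tail) ∨
      ∃ t < L.length, ∃ d < x.length, ∃ s r, L.flatten = s ++ x ++ r ∧
        s.length + d = (L.take t).flatten.length := by
  induction L with
  | nil => exact absurd (eq_nil_of_infix_nil h) hx
  | cons b L ih =>
    rw [flatten_cons, infix_append_iff_ne_nil] at h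
    rcases h with hb | hL | ⟨l₁, l₂, -, hl₂, rfl, ⟨s, rfl⟩, ⟨r, hr⟩⟩
    · by_cases hp : x <+: b
      · obtain ⟨r, rfl⟩ := hp
        exact .inr ⟨0, by simp, 0, length_pos_iff.2 hx, [], r ++ L.flatten, by simp, by simp⟩
      · exact .inl ⟨b, mem_cons_self, infix_tail_of_infix_of_not_prefix hb hp⟩
    · rcases ih hL with ⟨c, hc, hxc⟩ | ⟨t, ht, d, hd, s, r, hs, hsd⟩
      · exact .inl ⟨c, mem_cons_of_mem b hc, hxc⟩
      · refine .inr ⟨t + 1, by simpa using ht, d, hd, b ++ s, r, by simp [hs], ?_⟩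
        simp only [length_append, take_succ_cons, flatten_cons, ← hsd]
        omega
    · have hL : L ≠ [] := by rintro rfl; exact hl₂ (append_eq_nil_iff.1 (by simpa using hr.symm)).1
      refine .inr ⟨1, by simpa [length_pos_iff] using hL, l₁.length, ?_, s, r, ?_, by simp⟩
      · simpa using length_pos_iff.2 hl₂
      · simp [← hr]

end List

namespace SLP

variable {α : Type} (G : SLP α)

theorem val_eq_flatten (i : Fin G.n) : G.val i = ((G.rhs i).map G.symVal).flatten := by
  rw [SLP.val]
  congr 1
  have hsym : (fun (s : {x // x ∈ G.rhs i}) => match h : s.1 with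
      | .inl j => G.val j
      | .inr a => [a]) = fun s => G.symVal s.1 := by
    funext s; cases s.1 <;> simp [symVal]
  rw [hsym]
  exact List.attach_map_val

/-- The position in `G.val j` at which the expansion of the `t`-th symbol of `rhs j` begins. -/
def blockStart (j : Fin G.n) (t : ℕ) : ℕ :=
  (((G.rhs j).map G.symVal).take t).flatten.length

theorem exists_occurrence_at_blockStart {x : List α} (hx : x ≠ []) (i : Fin G.n)
    (h : x <:+: G.val i) :
    ∃ j : Fin G.n, ∃ t < (G.rhs j).length, ∃ d < x.length, ∃ s r,
      G.val j = s ++ x ++ r ∧ s.length + d = G.blockStart j t := by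
  induction i using WellFoundedLT.induction with
  | ind i ih =>
    rw [val_eq_flatten] at h
    rcases List.infix_flatten_cases_s16 _ hx h with ⟨b, hb, hxb⟩ | ⟨t, ht, d, hd, s, r, hs, hsd⟩
    · obtain ⟨c, hc, rfl⟩ := List.mem_map.1 hb
      cases c with
      | inl j =>
        exact ih j (Fin.lt_def.2 (G.dec i j hc)) (hxb.trans (List.tail_suffix _).isInfix)
      | inr a => exact absurd (List.eq_nil_of_infix_nil hxb) hx
    · exact ⟨i, t, by simpa using ht, d, hd, s, r, by rw [val_eq_flatten, hs], hsd⟩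

theorem ncard_factors_le (i : Fin G.n) {ℓ : ℕ} (hℓ : 1 ≤ ℓ) :
    {x : List α | x.length = ℓ ∧ x <:+: G.val i}.ncard ≤ G.size * ℓ := by
  let T : Finset ((_ : Fin G.n) × ℕ × ℕ) :=
    Finset.univ.sigma fun j => Finset.range (G.rhs j).length ×ˢ Finset.range ℓ
  let window : ((_ : Fin G.n) × ℕ × ℕ) → List α :=
    fun p => ((G.val p.1).drop (G.blockStart p.1 p.2.1 - p.2.2)).take ℓ
  have hsub : {x : List α | x.length = ℓ ∧ x <:+: G.val i} ⊆ window '' T := by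
    rintro x ⟨rfl, hx⟩
    obtain ⟨j, t, ht, d, hd, s, r, hs, hsd⟩ :=
      G.exists_occurrence_at_blockStart (List.ne_nil_of_length_pos hℓ) i hx
    exact ⟨⟨j, t, d⟩, by simp [T, ht, hd], by simp [window, hs, ← hsd]⟩
  calc _ ≤ (window '' T).ncard := Set.ncard_le_ncard hsub (T.finite_toSet.image _)
    _ ≤ (T : Set ((_ : Fin G.n) × ℕ × ℕ)).ncard := Set.ncard_image_le T.finite_toSet
    _ = G.size * ℓ := by
      rw [Set.ncard_coe_finset]
      simp [T, SLP.size, Finset.sum_mul]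

end SLP

theorem repair_stmt_16_general {Γ : Type} [DecidableEq Γ] (u : List Γ) (k ℓ D : ℕ)
    (hℓ : 1 ≤ ℓ) (v : ℕ → List Γ) (pos : ℕ → ℕ)
    (hocc : ∀ i, 1 ≤ i → i ≤ k → (u.drop (pos i)).take (v i).length = v i)
    (S : Finset (List Γ)) (hcard : D ≤ S.card)
    (hS : ∀ x ∈ S, x.length = ℓ ∧ (∑ i ∈ Finset.Icc 1 k, countOcc x (v i)) = 1) :
    D ≤ {x : List Γ | x.length = ℓ ∧ x <:+: u}.ncard ∧
    ∀ G : SLP Γ, G.produces u → D ≤ G.size * ℓ := by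
  have hfactor : ∀ x ∈ S, x.length = ℓ ∧ x <:+: u := by
    intro x hx
    obtain ⟨hlen, hsum⟩ := hS x hx
    obtain ⟨i, hi, hne⟩ := Finset.exists_ne_zero_of_sum_ne_zero (hsum ▸ one_ne_zero)
    obtain ⟨hi₁, hi₂⟩ := Finset.mem_Icc.1 hi
    have hvi : v i <:+: u := hocc i hi₁ hi₂ ▸ List.take_drop_infix u (pos i) (v i).length
    exact ⟨hlen, (List.infix_of_countOcc_ne_zero hne).trans hvi⟩
  have hD : D ≤ {x : List Γ | x.length = ℓ ∧ x <:+: u}.ncard :=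
    calc D ≤ S.card := hcard
      _ = (S : Set (List Γ)).ncard := (Set.ncard_coe_finset S).symm
      _ ≤ _ := Set.ncard_le_ncard hfactor ((List.finite_setOf_infix u).subset fun _ hx => hx.2)
  exact ⟨hD, fun G hG => hD.trans (hG ▸ G.ncard_factors_le G.start hℓ)⟩

/-- If `u` contains pairwise disjoint factors `v 1, …, v k` such that the combined
multiset of their factors of length `ℓ` contains at least `D` distinct words each
occurring exactly once, then `u` has at least `D` distinct factors of length `ℓ`, and any
SLP for `u` has size at least `D / ℓ`. -/
theorem repair_stmt_16 {Γ : Type} [DecidableEq Γ] (u : List Γ) (k ℓ D : ℕ)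
    (hℓ : 1 ≤ ℓ) (v : ℕ → List Γ) (pos : ℕ → ℕ)
    (hocc : ∀ i, 1 ≤ i → i ≤ k → (u.drop (pos i)).take (v i).length = v i)
    (hdisj : ∀ i j, 1 ≤ i → i < j → j ≤ k → pos i + (v i).length ≤ pos j)
    (S : Finset (List Γ)) (hcard : D ≤ S.card)
    (hS : ∀ x ∈ S, x.length = ℓ ∧ (∑ i ∈ Finset.Icc 1 k, countOcc x (v i)) = 1) :
    D ≤ {x : List Γ | x.length = ℓ ∧ x <:+: u}.ncard ∧
    ∀ G : SLP Γ, G.produces u → D ≤ G.size * ℓ :=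
  repair_stmt_16_general u k ℓ D hℓ v pos hocc S hcard hS
end
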